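/- If a finite set of existential rules R is parallelisable, then R is bounded: there exists an integer k such that for every instance I, the semi-oblivious chase of I with R terminates within k breadth-first steps, i.e., chase_k(I,R) = chase_∞(I,R). -/

import Mathlib

open scoped Classical
noncomputable section

namespace ER

/-- Terms: constants or variables (variables occurring in instances are called nulls). -/
inductive Term where
  | const : ℕ → Term
  | var : ℕ → Term
deriving DecidableEq

def Term.isConst : Term → Prop
  | .const _ => True
  | .var _ => False

/-- An atom `p(t₁,…,tₙ)`. -/
structure Atom where
  pred : ℕ
  args : List Term
deriving DecidableEq

def Atom.terms (a : Atom) : Set Term := {t | t ∈ a.args}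
def Atom.vars (a : Atom) : Set ℕ := {v | Term.var v ∈ a.args}

def termsOf (S : Set Atom) : Set Term := ⋃ a ∈ S, a.terms
def varsOf (S : Set Atom) : Set ℕ := ⋃ a ∈ S, a.vars
/-- The nulls (non-constant terms) occurring in a set of atoms. -/
def nullsOf (S : Set Atom) : Set Term := {t | t ∈ termsOf S ∧ ¬ t.isConst}

def Term.subst (σ : ℕ → Term) : Term → Term
  | .const c => .const c
  | .var v => σ v

def Atom.subst (σ : ℕ → Term) (a : Atom) : Atom := ⟨a.pred, a.args.map (Term.subst σ)⟩
def substSet (σ : ℕ → Term) (S : Set Atom) : Set Atom := (Atom.subst σ) '' S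

/-- A homomorphism from `S1` to `S2`: a substitution of variables by terms mapping `S1` into `S2`. -/
def isHom (σ : ℕ → Term) (S1 S2 : Set Atom) : Prop := substSet σ S1 ⊆ S2

/-- An injective homomorphism (injective on the terms of the source). -/
def isInjHom (σ : ℕ → Term) (S1 S2 : Set Atom) : Prop :=
  isHom σ S1 S2 ∧ Set.InjOn (Term.subst σ) (termsOf S1)

/-- An instance is a finite set of ground atoms. -/
def IsInstance (I : Set Atom) : Prop := I.Finite ∧ ∀ t ∈ termsOf I, t.isConst

/-- An existential rule, given by its body and head. -/
structure Rule where
  body : Set Atom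
  head : Set Atom

def Rule.frontier (R : Rule) : Set ℕ := varsOf R.body ∩ varsOf R.head
def Rule.exist (R : Rule) : Set ℕ := varsOf R.head \ varsOf R.body

/-- Well-formed rule: finite non-empty body and head, no constants. -/
def WfRule (R : Rule) : Prop :=
  R.body.Finite ∧ R.head.Finite ∧ R.body.Nonempty ∧ R.head.Nonempty ∧
  ∀ t ∈ termsOf (R.body ∪ R.head), ¬ t.isConst

def WfList (L : List Rule) : Prop := ∀ R ∈ L, WfRule R

/-- Restriction of a substitution to a set of variables (default value elsewhere). -/
def restrict (f : ℕ → Term) (F : Set ℕ) : ℕ → Term :=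
  fun v => if v ∈ F then f v else Term.const 0

/-- A semi-oblivious naming of nulls for the rules of `L`: the null created for an
existential variable depends only on the rule and the restriction of the trigger to the
frontier, and distinct such data yield distinct nulls. -/
def SONaming (L : List Rule) (ν : Rule → (ℕ → Term) → ℕ → ℕ) : Prop :=
  (∀ R ∈ L, ∀ f g : ℕ → Term,
      restrict f R.frontier = restrict g R.frontier → ν R f = ν R g) ∧
  (∀ R ∈ L, ∀ R' ∈ L, ∀ f f' x x', ν R f x = ν R' f' x' →
      R = R' ∧ restrict f R.frontier = restrict f' R'.frontier ∧ x = x')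

/-- The safe extension of a trigger `π`, replacing each existential variable by its null. -/
def safeSub (ν : Rule → (ℕ → Term) → ℕ → ℕ) (R : Rule) (π : ℕ → Term) : ℕ → Term :=
  fun y => if y ∈ R.exist then Term.var (ν R (restrict π R.frontier) y) else π y

/-- One breadth-first semi-oblivious chase step. -/
def chaseStep (ν : Rule → (ℕ → Term) → ℕ → ℕ) (L : List Rule) (S : Set Atom) : Set Atom :=
  S ∪ {a | ∃ R ∈ L, ∃ π : ℕ → Term, isHom π R.body S ∧ a ∈ substSet (safeSub ν R π) R.head}

/-- The breadth-first semi-oblivious chase. -/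
def chaseF (ν : Rule → (ℕ → Term) → ℕ → ℕ) (L : List Rule) (I : Set Atom) : ℕ → Set Atom
  | 0 => I
  | k + 1 => chaseStep ν L (chaseF ν L I k)

def chaseInf (ν : Rule → (ℕ → Term) → ℕ → ℕ) (L : List Rule) (I : Set Atom) : Set Atom :=
  ⋃ k, chaseF ν L I k

/-- `L'` parallelises `L`. -/
def Parallelises (L' L : List Rule) : Prop :=
  ∀ ν ν', SONaming L ν → SONaming L' ν' → ∀ I, IsInstance I →
    (∃ σ, isInjHom σ (chaseInf ν L I) (chaseF ν' L' I 1)) ∧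
    (∃ σ, isHom σ (chaseF ν' L' I 1) (chaseInf ν L I))

def Parallelisable (L : List Rule) : Prop := ∃ L', WfList L' ∧ Parallelises L' L

/-- Boundedness of the semi-oblivious chase, uniformly over all instances. -/
def Bounded (L : List Rule) : Prop :=
  ∃ k, ∀ ν, SONaming L ν → ∀ I, IsInstance I → chaseF ν L I k = chaseInf ν L I

def ChaseFinite (L : List Rule) : Prop :=
  ∀ ν, SONaming L ν → ∀ I, IsInstance I → ∃ k, chaseF ν L I k = chaseInf ν L I

/-- Two atoms are `T`-linked if they share a term of `T`. -/
def linked (T : Set Term) (a b : Atom) : Prop := ∃ t ∈ T, t ∈ a.terms ∧ t ∈ b.terms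

/-- Connectivity in `S` by a path of atoms where consecutive atoms share a term of `T`. -/
def connectedIn (S : Set Atom) (T : Set Term) (a b : Atom) : Prop :=
  a ∈ S ∧ b ∈ S ∧ Relation.ReflTransGen (fun x y => x ∈ S ∧ y ∈ S ∧ linked T x y) a b

/-- `P` is closed in `S` w.r.t. `T`-linkedness. -/
def closedIn (S : Set Atom) (T : Set Term) (P : Set Atom) : Prop :=
  ∀ a ∈ S, ∀ b ∈ P, linked T a b → a ∈ P

/-- A piece of `S` w.r.t. `T`: a non-empty subset closed under `T`-linkedness and minimal such. -/
def IsPiece (S : Set Atom) (T : Set Term) (P : Set Atom) : Prop :=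
  P.Nonempty ∧ P ⊆ S ∧ closedIn S T P ∧
  ∀ P', P' ⊆ P → P'.Nonempty → closedIn S T P' → P' = P

/-- A single-piece rule: its head is a piece of itself w.r.t. its existential variables. -/
def SinglePiece (R : Rule) : Prop := IsPiece R.head (Term.var '' R.exist) R.head

/-- The rule used at step `k` of a derivation. -/
def ruleAt (L : List Rule) (r : ℕ → ℕ) (k : ℕ) : Rule := L.getD (r k) ⟨∅, ∅⟩

/-- The set of atoms produced by the `k`-th rule application of a derivation. -/
def producedAt (ν : Rule → (ℕ → Term) → ℕ → ℕ) (L : List Rule) (r : ℕ → ℕ)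
    (π : ℕ → ℕ → Term) (k : ℕ) : Set Atom :=
  substSet (safeSub ν (ruleAt L r k) (π k)) (ruleAt L r k).head

def derivState (ν : Rule → (ℕ → Term) → ℕ → ℕ) (L : List Rule) (I : Set Atom)
    (r : ℕ → ℕ) (π : ℕ → ℕ → Term) : ℕ → Set Atom
  | 0 => I
  | k + 1 => derivState ν L I r π k ∪ producedAt ν L r π k

/-- An `R`-derivation of length `n` from `I`: each step applies a trigger. -/
def IsDeriv (ν : Rule → (ℕ → Term) → ℕ → ℕ) (L : List Rule) (I : Set Atom) (n : ℕ)
    (r : ℕ → ℕ) (π : ℕ → ℕ → Term) : Prop :=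
  ∀ k < n, r k < L.length ∧ isHom (π k) (ruleAt L r k).body (derivState ν L I r π k)

/-- A pieceful derivation: each trigger maps its rule's frontier entirely into the terms of
the initial instance, or entirely into the terms produced by a single earlier application. -/
def PiecefulDeriv (ν : Rule → (ℕ → Term) → ℕ → ℕ) (L : List Rule) (I : Set Atom) (n : ℕ)
    (r : ℕ → ℕ) (π : ℕ → ℕ → Term) : Prop :=
  ∀ k < n, (∀ x ∈ (ruleAt L r k).frontier, π k x ∈ termsOf I) ∨
    ∃ j < k, ∀ x ∈ (ruleAt L r k).frontier, π k x ∈ termsOf (producedAt ν L r π j)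

/-- A pieceful rule set: every derivation from every instance is pieceful. -/
def PiecefulSet (L : List Rule) : Prop :=
  ∀ ν, SONaming L ν → ∀ I, IsInstance I → ∀ n r π,
    IsDeriv ν L I n r π → PiecefulDeriv ν L I n r π

/-- First-order structures for the semantics of rules. -/
structure Struct where
  D : Type
  nonempty : Nonempty D
  interp : ℕ → List D → Prop
  cinterp : ℕ → D

def evalT (M : Struct) (v : ℕ → M.D) : Term → M.D
  | .const c => M.cinterp c
  | .var x => v x

def holdsA (M : Struct) (v : ℕ → M.D) (a : Atom) : Prop :=
  M.interp a.pred (a.args.map (evalT M v))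

/-- Satisfaction of (the universal-existential closure of) a rule in a structure. -/
def satRule (M : Struct) (R : Rule) : Prop :=
  ∀ v : ℕ → M.D, (∀ a ∈ R.body, holdsA M v a) →
    ∃ w : ℕ → M.D, (∀ x ∈ varsOf R.body, w x = v x) ∧ ∀ a ∈ R.head, holdsA M w a

/-- Separating variables of `S' ⊆ S`: variables occurring both in `S'` and in `S \ S'`. -/
def sepVars (S' S : Set Atom) : Set ℕ := varsOf S' ∩ varsOf (S \ S')

/-- A piece-unifier `(S', H', u)` of a set of atoms `S` with a rule `R`. -/
def IsPieceUnifier (S : Set Atom) (R : Rule) (S' H' : Set Atom) (u : ℕ → Term) : Prop :=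
  Disjoint (varsOf S) (varsOf (R.body ∪ R.head)) ∧
  S'.Nonempty ∧ S' ⊆ S ∧ H' ⊆ R.head ∧
  (∀ x, x ∉ R.frontier ∪ varsOf S' → u x = Term.var x) ∧
  (∀ x ∈ R.frontier ∪ varsOf S', ∃ y ∈ varsOf R.head, u x = Term.var y) ∧
  (∀ x ∈ R.frontier, ∃ y ∈ R.frontier, u x = Term.var y) ∧
  (∀ x ∈ sepVars S' S, ∃ y ∈ R.frontier, u x = Term.var y) ∧
  substSet u S' = substSet u H'

/-- The existential stability property of a piece-unifier of `body R2` with `R1`. -/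
def StableUnifier (R2 R1 : Rule) (B2' : Set Atom) (u : ℕ → Term) : Prop :=
  (∀ x ∈ R2.frontier, u x ∉ Term.var '' R1.exist) ∨ R2.frontier ⊆ varsOf B2'

/-- The existential composition `R2 ∘_μ R1` w.r.t. a piece-unifier `μ = (B2', H1', u)`
of `body R2` with `R1`. -/
def compose (R2 R1 : Rule) (B2' : Set Atom) (u : ℕ → Term) : Rule :=
  if ∀ x ∈ R2.frontier, u x ∉ Term.var '' R1.exist then
    ⟨substSet u R1.body ∪ substSet u (R2.body \ B2'), substSet u R2.head⟩
  else
    ⟨substSet u R1.body ∪ substSet u (R2.body \ B2'),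
     substSet u R1.head ∪ substSet u R2.head⟩

/-- The closure `R*` of a rule set under existential composition. -/
inductive InClosure (𝒮 : Set Rule) : Rule → Prop
  | base {R : Rule} : R ∈ 𝒮 → InClosure 𝒮 R
  | comp {Ri Rj : Rule} {B' H' : Set Atom} {u : ℕ → Term} :
      InClosure 𝒮 Ri → InClosure 𝒮 Rj →
      IsPieceUnifier Ri.body Rj B' H' u → InClosure 𝒮 (compose Ri Rj B' u)

def ruleSet (L : List Rule) : Set Rule := {R | R ∈ L}

/-- The stability property for a (possibly infinite) rule set. -/
def StableSet (𝒮 : Set Rule) : Prop :=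
  ∀ R1 ∈ 𝒮, ∀ R2 ∈ 𝒮, ∀ B2' H1' u,
    IsPieceUnifier R2.body R1 B2' H1' u → StableUnifier R2 R1 B2' u

/-- `J` is a result of one breadth-first chase step of a (possibly infinite) rule set on `I`,
with fresh pairwise-compatible nulls (semi-oblivious naming). -/
def OneStepResult (𝒮 : Set Rule) (I J : Set Atom) : Prop :=
  ∃ ν : Rule → (ℕ → Term) → ℕ → ℕ,
    (∀ R ∈ 𝒮, ∀ f x, Term.var (ν R f x) ∉ termsOf I) ∧
    (∀ R ∈ 𝒮, ∀ R' ∈ 𝒮, ∀ f f' x x', ν R f x = ν R' f' x' →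
        R = R' ∧ restrict f R.frontier = restrict f' R'.frontier ∧ x = x') ∧
    J = I ∪ {a | ∃ R ∈ 𝒮, ∃ π : ℕ → Term, isHom π R.body I ∧
                  a ∈ substSet (safeSub ν R π) R.head}

/-- `I, R ⊨ q` for a Boolean conjunctive query `q` (a set of atoms). -/
def Entails (L : List Rule) (I q : Set Atom) : Prop :=
  ∀ ν, SONaming L ν → ∃ k σ, isHom σ q (chaseF ν L I k)

/-- The null `t` occurs in at least `n` atoms of `S`. -/
def occursInAtLeast (S : Set Atom) (t : Term) (n : ℕ) : Prop :=
  ∃ F : Set Atom, F ⊆ {a | a ∈ S ∧ t ∈ a.terms} ∧ F.Finite ∧ n ≤ F.ncard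

def FrontierGuarded (R : Rule) : Prop := ∃ a ∈ R.body, R.frontier ⊆ a.vars

def IsDatalog (R : Rule) : Prop := R.exist = ∅ ∧ ∃ a, R.head = {a}

end ER

/-!
Parallelisation yields a uniform `K` such that every chase maps homomorphically into its own
`K`-th level: the heads of the finitely many parallel rules are reached, from their frozen
bodies, within `K` steps. Freezing the nulls of a chase level `j` into constants sharpens this:
an atom whose terms all exist at level `j` exists at level `j + K`, and a null whose trigger's
frontier exists at level `j` exists at level `j + K + 1`.

The chase of the critical instance is finite, being an injective image of a one-step chase;
say it stops at level `D`. Collapsing all constants maps (the relevant part of) any instance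
into the critical instance, and induction on the level at which the image of a null appears
there shows that every null exists by level `(K + 1) * D`, so every atom by `(K + 1) * D + K`.
-/
namespace ER

section Atoms

lemma mem_termsOf {S : Set Atom} {t : Term} : t ∈ termsOf S ↔ ∃ a ∈ S, t ∈ a.terms := by
  simp [termsOf]

lemma termsOf_mono {S T : Set Atom} (h : S ⊆ T) : termsOf S ⊆ termsOf T :=
  Set.biUnion_subset_biUnion_left h

lemma mem_varsOf {S : Set Atom} {v : ℕ} : v ∈ varsOf S ↔ Term.var v ∈ termsOf S := by
  simp [varsOf, termsOf, Atom.vars, Atom.terms]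

lemma var_not_mem_termsOf {S : Set Atom} (hS : ∀ t ∈ termsOf S, t.isConst) (u : ℕ) :
    Term.var u ∉ termsOf S :=
  fun h => hS _ h

lemma Term.eq_const_of_isConst {t : Term} (ht : t.isConst) : ∃ c, t = Term.const c := by
  cases t with
  | const c => exact ⟨c, rfl⟩
  | var v => exact ht.elim

def mapAtom (g : Term → Term) (a : Atom) : Atom := ⟨a.pred, a.args.map g⟩

lemma mem_terms_mapAtom {g : Term → Term} {a : Atom} {t : Term} :
    t ∈ (mapAtom g a).terms ↔ ∃ s ∈ a.terms, g s = t := by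
  simp [mapAtom, Atom.terms]

lemma mapAtom_congr {g g' : Term → Term} {a : Atom} (h : ∀ t ∈ a.terms, g t = g' t) :
    mapAtom g a = mapAtom g' a := by
  simp only [mapAtom, Atom.mk.injEq, true_and]
  exact List.map_congr_left h

lemma mapAtom_eq_self {g : Term → Term} {a : Atom} (h : ∀ t ∈ a.terms, g t = t) :
    mapAtom g a = a :=
  (mapAtom_congr (g' := id) h).trans (by simp [mapAtom])

lemma mapAtom_mapAtom (g f : Term → Term) (a : Atom) :
    mapAtom g (mapAtom f a) = mapAtom (fun t => g (f t)) a := by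
  simp [mapAtom, Function.comp_def]

lemma _root_.List.eq_of_map_eq_of_injOn {α β : Type*} {f : α → β} {l₁ l₂ : List α}
    (hf : Set.InjOn f {x | x ∈ l₁ ∨ x ∈ l₂}) (h : l₁.map f = l₂.map f) : l₁ = l₂ := by
  induction l₁ generalizing l₂ with
  | nil => exact (List.map_eq_nil_iff.1 h.symm).symm
  | cons x l₁ ih =>
    obtain _ | ⟨y, l₂⟩ := l₂
    · simp at h
    · simp only [List.map_cons, List.cons.injEq] at h
      have hxy : x = y := hf (by simp) (by simp) h.1
      refine hxy ▸ congrArg _ (ih (fun a ha b hb => hf ?_ ?_) h.2) <;> aesop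

lemma mapAtom_injOn {g : Term → Term} {A : Set Atom} (hg : Set.InjOn g (termsOf A)) :
    Set.InjOn (mapAtom g) A := by
  rintro ⟨p, l⟩ ha ⟨q, l'⟩ hb h
  simp only [mapAtom, Atom.mk.injEq] at h
  have hl : ∀ s, s ∈ l ∨ s ∈ l' → s ∈ termsOf A := by
    rintro s (hs | hs)
    exacts [mem_termsOf.2 ⟨_, ha, hs⟩, mem_termsOf.2 ⟨_, hb, hs⟩]
  rw [h.1, List.eq_of_map_eq_of_injOn (fun s hs t ht => hg (hl s hs) (hl t ht)) h.2]

lemma Atom.subst_eq_mapAtom (σ : ℕ → Term) (a : Atom) :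
    Atom.subst σ a = mapAtom (Term.subst σ) a := rfl

lemma Atom.mem_terms_subst {σ : ℕ → Term} {a : Atom} {t : Term} :
    t ∈ (Atom.subst σ a).terms ↔ ∃ s ∈ a.terms, Term.subst σ s = t :=
  mem_terms_mapAtom

lemma Atom.subst_congr {σ τ : ℕ → Term} {a : Atom}
    (h : ∀ t ∈ a.terms, Term.subst σ t = Term.subst τ t) : Atom.subst σ a = Atom.subst τ a :=
  mapAtom_congr h

lemma Atom.subst_subst (σ τ : ℕ → Term) (a : Atom) :
    Atom.subst σ (Atom.subst τ a) = Atom.subst (fun v => Term.subst σ (τ v)) a :=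
  (mapAtom_mapAtom _ _ a).trans (mapAtom_congr fun t _ => by cases t <;> rfl)

lemma Atom.subst_eq_self {σ : ℕ → Term} {a : Atom} (h : ∀ t ∈ a.terms, t.isConst) :
    Atom.subst σ a = a :=
  mapAtom_eq_self fun t ht => by obtain ⟨c, rfl⟩ := Term.eq_const_of_isConst (h t ht); rfl

lemma mapAtom_subst {g : Term → Term} {π : ℕ → Term} {b : Atom}
    (hb : ∀ t ∈ b.terms, ∃ v, t = Term.var v) :
    mapAtom g (Atom.subst π b) = Atom.subst (fun v => g (π v)) b :=
  (mapAtom_mapAtom _ _ b).trans (mapAtom_congr fun t ht => by obtain ⟨v, rfl⟩ := hb t ht; rfl)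

end Atoms

section Rules

variable {R : Rule}

lemma WfRule.exists_var_of_mem_body (hR : WfRule R) {b : Atom} (hb : b ∈ R.body) {t : Term}
    (ht : t ∈ b.terms) : ∃ v, t = Term.var v := by
  cases t with
  | var v => exact ⟨v, rfl⟩
  | const c => exact (hR.2.2.2.2 _ (mem_termsOf.2 ⟨b, Or.inl hb, ht⟩) trivial).elim

lemma WfRule.exists_var_of_mem_head (hR : WfRule R) {h : Atom} (hh : h ∈ R.head) {t : Term}
    (ht : t ∈ h.terms) : ∃ v, t = Term.var v := by
  cases t with
  | var v => exact ⟨v, rfl⟩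
  | const c => exact (hR.2.2.2.2 _ (mem_termsOf.2 ⟨h, Or.inr hh, ht⟩) trivial).elim

lemma Rule.mem_frontier_or_mem_exist {y : ℕ} (hy : y ∈ varsOf R.head) :
    y ∈ R.frontier ∨ y ∈ R.exist := by
  by_cases hb : y ∈ varsOf R.body
  exacts [Or.inl ⟨hb, hy⟩, Or.inr ⟨hy, hb⟩]

lemma restrict_of_mem {f : ℕ → Term} {F : Set ℕ} {v : ℕ} (h : v ∈ F) :
    restrict f F v = f v := if_pos h

@[simp]
lemma restrict_restrict (f : ℕ → Term) (F : Set ℕ) :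
    restrict (restrict f F) F = restrict f F := by
  funext v
  by_cases h : v ∈ F <;> simp [restrict, h]

lemma restrict_congr {f g : ℕ → Term} {F : Set ℕ} (h : ∀ v ∈ F, f v = g v) :
    restrict f F = restrict g F := by
  funext v
  by_cases hv : v ∈ F <;> simp [restrict, hv, h]

lemma safeSub_of_mem_exist {ν : Rule → (ℕ → Term) → ℕ → ℕ} {π : ℕ → Term} {y : ℕ}
    (h : y ∈ R.exist) : safeSub ν R π y = Term.var (ν R (restrict π R.frontier) y) := if_pos h

lemma safeSub_of_mem_frontier {ν : Rule → (ℕ → Term) → ℕ → ℕ} {π : ℕ → Term} {y : ℕ}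
    (h : y ∈ R.frontier) : safeSub ν R π y = π y := if_neg fun he => he.2 h.1

lemma subst_safeSub_congr {ν : Rule → (ℕ → Term) → ℕ → ℕ} {π π' : ℕ → Term}
    (hres : restrict π R.frontier = restrict π' R.frontier) {h : Atom} (hh : h ∈ R.head) :
    Atom.subst (safeSub ν R π) h = Atom.subst (safeSub ν R π') h := by
  refine Atom.subst_congr fun t ht => ?_
  obtain _ | y := t
  · rfl
  rcases Rule.mem_frontier_or_mem_exist (mem_varsOf.2 (mem_termsOf.2 ⟨h, hh, ht⟩)) with hy | hy
  · simpa [Term.subst, safeSub_of_mem_frontier hy, restrict_of_mem hy] using congrFun hres y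
  · simp [Term.subst, safeSub_of_mem_exist hy, hres]

lemma isHom.apply_mem_termsOf {π : ℕ → Term} {B S : Set Atom} (hπ : isHom π B S) {y : ℕ}
    (hy : y ∈ varsOf B) : π y ∈ termsOf S := by
  obtain ⟨b, hb, hyb⟩ := mem_termsOf.1 (mem_varsOf.1 hy)
  exact mem_termsOf.2 ⟨_, hπ ⟨b, hb, rfl⟩, Atom.mem_terms_subst.2 ⟨_, hyb, rfl⟩⟩

end Rules

section Chase

variable {ν : Rule → (ℕ → Term) → ℕ → ℕ} {L : List Rule}

lemma chaseStep_mono {S T : Set Atom} (h : S ⊆ T) : chaseStep ν L S ⊆ chaseStep ν L T := by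
  rintro a (ha | ⟨R, hR, π, hπ, hmem⟩)
  exacts [Or.inl (h ha), Or.inr ⟨R, hR, π, hπ.trans h, hmem⟩]

lemma chaseF_mono {I : Set Atom} : Monotone (chaseF ν L I) :=
  monotone_nat_of_le_succ fun _ => Set.subset_union_left

lemma chaseF_mono_left {I J : Set Atom} (h : I ⊆ J) (n : ℕ) :
    chaseF ν L I n ⊆ chaseF ν L J n := by
  induction n with
  | zero => exact h
  | succ n ih => exact chaseStep_mono ih

lemma chaseF_add (I : Set Atom) (j n : ℕ) :
    chaseF ν L I (j + n) = chaseF ν L (chaseF ν L I j) n := by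
  induction n with
  | zero => rfl
  | succ n ih => rw [← Nat.add_assoc, chaseF, chaseF, ih]

lemma chaseF_subset_chaseInf (I : Set Atom) (n : ℕ) : chaseF ν L I n ⊆ chaseInf ν L I :=
  Set.subset_iUnion (chaseF ν L I) n

lemma mem_chaseInf {I : Set Atom} {a : Atom} : a ∈ chaseInf ν L I ↔ ∃ n, a ∈ chaseF ν L I n :=
  Set.mem_iUnion

lemma mem_chaseF_succ_of_trigger {I : Set Atom} {n : ℕ} {R : Rule} (hR : R ∈ L)
    {π : ℕ → Term} (hπ : isHom π R.body (chaseF ν L I n)) {h : Atom} (hh : h ∈ R.head) :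
    Atom.subst (safeSub ν R π) h ∈ chaseF ν L I (n + 1) :=
  Or.inr ⟨R, hR, π, hπ, h, hh, rfl⟩

lemma null_mem_termsOf_chaseF_succ {I : Set Atom} {n : ℕ} {R : Rule} (hR : R ∈ L)
    {π : ℕ → Term} (hπ : isHom π R.body (chaseF ν L I n)) {x : ℕ} (hx : x ∈ R.exist) :
    Term.var (ν R (restrict π R.frontier) x) ∈ termsOf (chaseF ν L I (n + 1)) := by
  obtain ⟨h, hh, hxh⟩ := mem_termsOf.1 (mem_varsOf.1 hx.1)
  refine mem_termsOf.2 ⟨_, mem_chaseF_succ_of_trigger hR hπ hh,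
    Atom.mem_terms_subst.2 ⟨_, hxh, ?_⟩⟩
  rw [Term.subst, safeSub_of_mem_exist hx]

lemma exists_subset_chaseF_of_finite {I A : Set Atom} (hA : A.Finite)
    (hsub : A ⊆ chaseInf ν L I) : ∃ k, A ⊆ chaseF ν L I k := by
  induction A, hA using Set.Finite.induction_on with
  | empty => exact ⟨0, Set.empty_subset _⟩
  | @insert a s _ _ ih =>
    obtain ⟨k, hk⟩ := ih ((Set.subset_insert a s).trans hsub)
    obtain ⟨m, hm⟩ := mem_chaseInf.1 (hsub (Set.mem_insert a s))
    exact ⟨max k m, Set.insert_subset (chaseF_mono (le_max_right k m) hm)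
      (hk.trans (chaseF_mono (le_max_left k m)))⟩

lemma mem_terms_subst_safeSub {R : Rule} (hR : WfRule R) {π : ℕ → Term} {h : Atom}
    (hh : h ∈ R.head) {t : Term} (ht : t ∈ (Atom.subst (safeSub ν R π) h).terms) :
    (∃ x ∈ R.exist, t = Term.var (ν R (restrict π R.frontier) x)) ∨
      ∃ y ∈ R.frontier, t = π y := by
  obtain ⟨s, hs, rfl⟩ := Atom.mem_terms_subst.1 ht
  obtain ⟨y, rfl⟩ := hR.exists_var_of_mem_head hh hs
  rcases Rule.mem_frontier_or_mem_exist (mem_varsOf.2 (mem_termsOf.2 ⟨h, hh, hs⟩)) with hy | hy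
  · exact Or.inr ⟨y, hy, safeSub_of_mem_frontier hy⟩
  · exact Or.inl ⟨y, hy, safeSub_of_mem_exist hy⟩

lemma mem_termsOf_chaseF_succ (hL : WfList L) {I : Set Atom} {n : ℕ} {t : Term}
    (ht : t ∈ termsOf (chaseF ν L I (n + 1))) :
    t ∈ termsOf (chaseF ν L I n) ∨
      ∃ R ∈ L, ∃ π x, isHom π R.body (chaseF ν L I n) ∧ x ∈ R.exist ∧
        t = Term.var (ν R (restrict π R.frontier) x) := by
  obtain ⟨a, ha | ⟨R, hR, π, hπ, h, hh, rfl⟩, hta⟩ := mem_termsOf.1 ht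
  · exact Or.inl (mem_termsOf.2 ⟨a, ha, hta⟩)
  rcases mem_terms_subst_safeSub (hL R hR) hh hta with ⟨x, hx, rfl⟩ | ⟨y, hy, rfl⟩
  · exact Or.inr ⟨R, hR, π, x, hπ, hx, rfl⟩
  · exact Or.inl (hπ.apply_mem_termsOf hy.1)

lemma const_mem_termsOf_of_mem_chaseF (hL : WfList L) {I : Set Atom} {n c : ℕ}
    (ht : Term.const c ∈ termsOf (chaseF ν L I n)) : Term.const c ∈ termsOf I := by
  induction n with
  | zero => exact ht
  | succ n ih =>
    rcases mem_termsOf_chaseF_succ hL ht with h | ⟨_, _, _, _, _, _, h⟩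
    exacts [ih h, Term.noConfusion h]

lemma exists_trigger_of_var_mem_chaseF (hL : WfList L) {I : Set Atom}
    (hI : ∀ t ∈ termsOf I, t.isConst) {n u : ℕ} (hu : Term.var u ∈ termsOf (chaseF ν L I n)) :
    ∃ m < n, ∃ R ∈ L, ∃ π x, isHom π R.body (chaseF ν L I m) ∧ x ∈ R.exist ∧
      u = ν R (restrict π R.frontier) x := by
  induction n with
  | zero => exact (var_not_mem_termsOf hI u hu).elim
  | succ n ih =>
    rcases mem_termsOf_chaseF_succ hL hu with h | ⟨R, hR, π, x, hπ, hx, h⟩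
    · obtain ⟨m, hm, rest⟩ := ih h
      exact ⟨m, hm.trans n.lt_succ_self, rest⟩
    · exact ⟨n, n.lt_succ_self, R, hR, π, x, hπ, hx, Term.var.inj h⟩

lemma SONaming.exists_trigger_of_mem_chaseF (hν : SONaming L ν) (hL : WfList L)
    {I : Set Atom} (hI : ∀ t ∈ termsOf I, t.isConst) {n : ℕ} {R : Rule} (hR : R ∈ L)
    {ρ : ℕ → Term} {x : ℕ}
    (hρ : Term.var (ν R (restrict ρ R.frontier) x) ∈ termsOf (chaseF ν L I n)) :
    ∃ m < n, ∃ π, isHom π R.body (chaseF ν L I m) ∧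
      restrict π R.frontier = restrict ρ R.frontier := by
  obtain ⟨m, hm, R', hR', π, x', hπ, -, heq⟩ := exists_trigger_of_var_mem_chaseF hL hI hρ
  obtain ⟨rfl, hres, -⟩ := hν.2 R hR R' hR' _ _ _ _ heq
  exact ⟨m, hm, π, hπ, by simpa using hres.symm⟩

end Chase

section Finiteness

variable {ν : Rule → (ℕ → Term) → ℕ → ℕ} {L : List Rule}

lemma termsOf_finite {S : Set Atom} (hS : S.Finite) : (termsOf S).Finite :=
  hS.biUnion fun a _ => a.args.finite_toSet

lemma varsOf_finite {S : Set Atom} (hS : S.Finite) : (varsOf S).Finite :=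
  hS.biUnion fun a _ =>
    (a.args.finite_toSet.preimage (fun _ _ _ _ h => Term.var.inj h) : (Term.var ⁻¹' a.terms).Finite)

lemma WfRule.frontier_finite {R : Rule} (hR : WfRule R) : R.frontier.Finite :=
  (varsOf_finite hR.1).subset Set.inter_subset_left

lemma finite_restricted_maps {F : Set ℕ} (hF : F.Finite) {T : Set Term} (hT : T.Finite) :
    {g : ℕ → Term | (∀ v ∈ F, g v ∈ T) ∧ restrict g F = g}.Finite := by
  have := hF.to_subtype
  refine Set.Finite.of_finite_image (f := fun g (v : F) => g v)
    ((Set.Finite.pi (t := fun _ => T) fun _ => hT).subset ?_) ?_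
  · rintro _ ⟨g, hg, rfl⟩ v -
    exact hg.1 v v.2
  · intro g hg g' hg' h
    rw [← hg.2, ← hg'.2]
    exact restrict_congr fun v hv => congrFun h ⟨v, hv⟩

lemma chaseStep_finite (hL : WfList L) {S : Set Atom} (hS : S.Finite) :
    (chaseStep ν L S).Finite := by
  refine hS.union (((L.finite_toSet.biUnion fun R hR => (hL R hR).2.1.biUnion fun h _ =>
    ((finite_restricted_maps (hL R hR).frontier_finite (termsOf_finite hS)).image
      fun g => Atom.subst (safeSub ν R g) h))).subset ?_)
  rintro _ ⟨R, hR, π, hπ, h, hh, rfl⟩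
  refine Set.mem_biUnion hR (Set.mem_biUnion hh
    ⟨restrict π R.frontier, ⟨fun v hv => ?_, restrict_restrict π _⟩,
      subst_safeSub_congr (restrict_restrict π _) hh⟩)
  rw [restrict_of_mem hv]
  exact hπ.apply_mem_termsOf hv.1

lemma chaseF_finite (hL : WfList L) {I : Set Atom} (hI : I.Finite) (n : ℕ) :
    (chaseF ν L I n).Finite := by
  induction n with
  | zero => exact hI
  | succ n ih => exact chaseStep_finite hL ih

lemma isInjHom.finite {σ : ℕ → Term} {A B : Set Atom} (hσ : isInjHom σ A B) (hB : B.Finite) :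
    A.Finite :=
  Set.Finite.of_finite_image (hB.subset hσ.1) (mapAtom_injOn hσ.2)

end Finiteness

section Naming

instance : Encodable Term :=
  Encodable.ofEquiv (ℕ ⊕ ℕ)
    { toFun := fun | .const c => .inl c | .var v => .inr v
      invFun := fun | .inl c => .const c | .inr v => .var v
      left_inv := fun t => by cases t <;> rfl
      right_inv := fun s => by cases s <;> rfl }

def frontierList (R : Rule) : List ℕ :=
  if h : R.frontier.Finite then h.toFinset.sort (· ≤ ·) else []

lemma WfRule.mem_frontierList {R : Rule} (hR : WfRule R) {v : ℕ} :
    v ∈ frontierList R ↔ v ∈ R.frontier := by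
  simp [frontierList, hR.frontier_finite]

lemma exists_SONaming {L : List Rule} (hL : WfList L) : ∃ ν, SONaming L ν := by
  refine ⟨fun R f x => Encodable.encode (L.idxOf R, (frontierList R).map f, x), ?_, ?_⟩
  · intro R hR f g hfg
    have hmap : (frontierList R).map f = (frontierList R).map g :=
      List.map_inj_left.2 fun v hv => by
        simpa [restrict_of_mem ((hL R hR).mem_frontierList.1 hv)] using congrFun hfg v
    simp only [hmap]
  · intro R hR R' hR' f f' x x' h
    simp only [Encodable.encode_inj, Prod.mk.injEq] at h
    obtain ⟨hidx, hmap, rfl⟩ := h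
    obtain rfl : R = R' := by
      rw [← List.getElem_idxOf (List.idxOf_lt_length_iff.2 hR),
        ← List.getElem_idxOf (List.idxOf_lt_length_iff.2 hR')]
      simp only [hidx]
    refine ⟨rfl, restrict_congr fun v hv => ?_, rfl⟩
    exact List.map_inj_left.1 hmap v ((hL R hR).mem_frontierList.2 hv)

end Naming

section Transport

variable {ν ν₁ ν₂ : Rule → (ℕ → Term) → ℕ → ℕ} {L : List Rule}

instance : Nonempty Term := ⟨.const 0⟩

instance : Nonempty Rule := ⟨⟨∅, ∅⟩⟩

def NullSource (ν : Rule → (ℕ → Term) → ℕ → ℕ) (L : List Rule) (t : Term)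
    (p : Rule × (ℕ → Term) × ℕ) : Prop :=
  p.1 ∈ L ∧ restrict p.2.1 p.1.frontier = p.2.1 ∧ t = Term.var (ν p.1 p.2.1 p.2.2)

lemma exists_nullSource {R : Rule} (hR : R ∈ L) (π : ℕ → Term) (x : ℕ) :
    ∃ p, NullSource ν L (Term.var (ν R (restrict π R.frontier) x)) p :=
  ⟨(R, restrict π R.frontier, x), hR, restrict_restrict π _, rfl⟩

lemma SONaming.epsilon_nullSource (hν : SONaming L ν) {R : Rule} (hR : R ∈ L) (π : ℕ → Term)
    (x : ℕ) : Classical.epsilon (NullSource ν L (Term.var (ν R (restrict π R.frontier) x))) =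
      (R, restrict π R.frontier, x) := by
  obtain ⟨hp, hpres, hpx⟩ := Classical.epsilon_spec (exists_nullSource hR π x)
  obtain ⟨hR', hres, hx⟩ := hν.2 _ hp R hR _ _ _ _ (Term.var.inj hpx).symm
  exact Prod.ext hR' (Prod.ext (hpres.symm.trans (hres.trans (restrict_restrict π _))) hx)

/-- Lifts a map `β` on the terms `B` of a set `S₀` along the first `n` steps of the chase of
`S₀`, mapping nulls name by name from the naming `ν₁` to the naming `ν₂`. -/
def transport (ν₁ ν₂ : Rule → (ℕ → Term) → ℕ → ℕ) (L : List Rule) (B : Set Term)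
    (β : Term → Term) : ℕ → Term → Term
  | 0, t => β t
  | n + 1, t =>
    if t ∉ B ∧ ∃ p, NullSource ν₁ L t p then
      let p := Classical.epsilon (NullSource ν₁ L t)
      Term.var (ν₂ p.1 (restrict (fun v => transport ν₁ ν₂ L B β n (p.2.1 v)) p.1.frontier) p.2.2)
    else β t

variable {B : Set Term} {β : Term → Term}

lemma transport_of_mem {t : Term} (ht : t ∈ B) (n : ℕ) : transport ν₁ ν₂ L B β n t = β t := by
  cases n <;> simp [transport, ht]

lemma transport_const (c n : ℕ) :
    transport ν₁ ν₂ L B β n (Term.const c) = β (Term.const c) := by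
  cases n <;> simp [transport, NullSource]

lemma transport_succ_null (hν₁ : SONaming L ν₁) {R : Rule} (hR : R ∈ L) {π : ℕ → Term}
    {x : ℕ} (hB : Term.var (ν₁ R (restrict π R.frontier) x) ∉ B) (n : ℕ) :
    transport ν₁ ν₂ L B β (n + 1) (Term.var (ν₁ R (restrict π R.frontier) x)) =
      Term.var (ν₂ R (restrict (fun v => transport ν₁ ν₂ L B β n (π v)) R.frontier) x) := by
  simp only [transport, hB, not_false_eq_true, exists_nullSource hR, and_self, if_true,
    hν₁.epsilon_nullSource hR]
  congr 2
  exact restrict_congr fun v hv => by rw [restrict_of_mem hv]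

lemma transport_stable (hL : WfList L) (hν₁ : SONaming L ν₁) {S₀ : Set Atom} {n : ℕ} {t : Term}
    (ht : t ∈ termsOf (chaseF ν₁ L S₀ n)) {m : ℕ} (hm : n ≤ m) :
    transport ν₁ ν₂ L (termsOf S₀) β m t = transport ν₁ ν₂ L (termsOf S₀) β n t := by
  induction n generalizing t m with
  | zero => exact (transport_of_mem (B := termsOf S₀) ht m).trans (transport_of_mem ht 0).symm
  | succ n ih =>
    rcases mem_termsOf_chaseF_succ hL ht with hold | ⟨R, hR, π, x, hπ, -, rfl⟩
    · rw [ih hold (by omega : n ≤ m), ih hold n.le_succ]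
    by_cases hB : Term.var (ν₁ R (restrict π R.frontier) x) ∈ termsOf S₀
    · rw [transport_of_mem hB, transport_of_mem hB]
    obtain ⟨m, rfl⟩ := Nat.exists_eq_add_of_le' (show 1 ≤ m by omega)
    rw [transport_succ_null hν₁ hR hB, transport_succ_null hν₁ hR hB]
    congr 2
    exact restrict_congr fun v hv => ih (hπ.apply_mem_termsOf hv.1) (by omega)

/-- The chase of a set `S` that contains nulls may create them again; this asks that it then
creates only atoms of `S`. -/
def NullClosed (ν : Rule → (ℕ → Term) → ℕ → ℕ) (L : List Rule) (S : Set Atom) : Prop :=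
  ∀ R ∈ L, ∀ π n, isHom π R.body (chaseF ν L S n) → ∀ x ∈ R.exist,
    Term.var (ν R (restrict π R.frontier) x) ∈ termsOf S → substSet (safeSub ν R π) R.head ⊆ S

lemma nullClosed_of_ground {S : Set Atom} (hS : ∀ t ∈ termsOf S, t.isConst) :
    NullClosed ν L S :=
  fun _ _ _ _ _ _ _ hx => (var_not_mem_termsOf hS _ hx).elim

lemma SONaming.nullClosed_chaseF (hν : SONaming L ν) (hL : WfList L) {I : Set Atom}
    (hI : ∀ t ∈ termsOf I, t.isConst) (j : ℕ) : NullClosed ν L (chaseF ν L I j) := by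
  rintro R hR π n - x - hx _ ⟨h, hh, rfl⟩
  obtain ⟨m, hm, π₀, hπ₀, hres⟩ := hν.exists_trigger_of_mem_chaseF hL hI hR hx
  rw [subst_safeSub_congr hres.symm hh]
  exact chaseF_mono hm (mem_chaseF_succ_of_trigger hR hπ₀ hh)

lemma mapAtom_transport_subst_safeSub (hL : WfList L) (hν₁ : SONaming L ν₁) {S₀ : Set Atom}
    {n : ℕ} {R : Rule} (hR : R ∈ L) {π : ℕ → Term} (hπ : isHom π R.body (chaseF ν₁ L S₀ n))
    (hnew : ∀ x ∈ R.exist, Term.var (ν₁ R (restrict π R.frontier) x) ∉ termsOf S₀)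
    {h : Atom} (hh : h ∈ R.head) :
    mapAtom (transport ν₁ ν₂ L (termsOf S₀) β (n + 1)) (Atom.subst (safeSub ν₁ R π) h) =
      Atom.subst (safeSub ν₂ R fun v => transport ν₁ ν₂ L (termsOf S₀) β n (π v)) h := by
  rw [mapAtom_subst fun t ht => (hL R hR).exists_var_of_mem_head hh ht]
  refine Atom.subst_congr fun t ht => ?_
  obtain ⟨y, rfl⟩ := (hL R hR).exists_var_of_mem_head hh ht
  rcases Rule.mem_frontier_or_mem_exist (mem_varsOf.2 (mem_termsOf.2 ⟨h, hh, ht⟩)) with hy | hy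
  · simp only [Term.subst, safeSub_of_mem_frontier hy]
    exact transport_stable hL hν₁ (hπ.apply_mem_termsOf hy.1) n.le_succ
  · simp only [Term.subst, safeSub_of_mem_exist hy]
    exact transport_succ_null hν₁ hR (hnew y hy) n

lemma mapAtom_transport_mem_chaseF (hL : WfList L) (hν₁ : SONaming L ν₁) {S₀ T₀ : Set Atom}
    (hS₀ : NullClosed ν₁ L S₀) (hβ : ∀ a ∈ S₀, mapAtom β a ∈ T₀) (n : ℕ) :
    ∀ a ∈ chaseF ν₁ L S₀ n,
      mapAtom (transport ν₁ ν₂ L (termsOf S₀) β n) a ∈ chaseF ν₂ L T₀ n := by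
  induction n with
  | zero => exact fun a ha => hβ a ha
  | succ n ih =>
    rintro _ (ha | ⟨R, hR, π, hπ, h, hh, rfl⟩)
    · rw [mapAtom_congr fun t ht => transport_stable hL hν₁ (mem_termsOf.2 ⟨_, ha, ht⟩) n.le_succ]
      exact chaseF_mono n.le_succ (ih _ ha)
    by_cases hold : ∃ x ∈ R.exist, Term.var (ν₁ R (restrict π R.frontier) x) ∈ termsOf S₀
    · obtain ⟨x, hx, hxS⟩ := hold
      have haS := hS₀ R hR π n hπ x hx hxS ⟨h, hh, rfl⟩
      rw [mapAtom_congr fun t ht => transport_of_mem (mem_termsOf.2 ⟨_, haS, ht⟩) _]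
      exact chaseF_mono (Nat.zero_le _) (hβ _ haS)
    push Not at hold
    rw [mapAtom_transport_subst_safeSub hL hν₁ hR hπ hold hh]
    refine mem_chaseF_succ_of_trigger hR ?_ hh
    rintro _ ⟨b, hb, rfl⟩
    rw [← mapAtom_subst fun t ht => (hL R hR).exists_var_of_mem_body hb ht]
    exact ih _ (hπ ⟨b, hb, rfl⟩)

end Transport

section Parallelisation

variable {L L' : List Rule}

lemma isHom.comp {σ τ : ℕ → Term} {A B C : Set Atom} (hσ : isHom σ A B) (hτ : isHom τ B C) :
    isHom (fun v => Term.subst τ (σ v)) A C := by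
  rintro _ ⟨a, ha, rfl⟩
  rw [← Atom.subst_subst]
  exact hτ ⟨_, hσ ⟨a, ha, rfl⟩, rfl⟩

def HomBounded (L : List Rule) (K : ℕ) : Prop :=
  ∀ ν, SONaming L ν → ∀ J, IsInstance J → ∃ σ, isHom σ (chaseInf ν L J) (chaseF ν L J K)

def Rule.frozenBody (R : Rule) : Set Atom := substSet Term.const R.body

lemma WfRule.isInstance_frozenBody {R : Rule} (hR : WfRule R) : IsInstance R.frozenBody := by
  refine ⟨hR.1.image _, fun t ht => ?_⟩
  obtain ⟨_, ⟨b, hb, rfl⟩, hta⟩ := mem_termsOf.1 ht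
  obtain ⟨s, hs, rfl⟩ := Atom.mem_terms_subst.1 hta
  obtain ⟨v, rfl⟩ := hR.exists_var_of_mem_body hb hs
  trivial

lemma Parallelises.exists_frozen_head_image (hL' : WfList L') (hpar : Parallelises L' L)
    {ν : Rule → (ℕ → Term) → ℕ → ℕ} (hν : SONaming L ν) {ν' : Rule → (ℕ → Term) → ℕ → ℕ}
    (hν' : SONaming L' ν') {R' : Rule} (hR' : R' ∈ L') :
    ∃ k w, (∀ y ∈ R'.frontier, w y = Term.const y) ∧
      isHom w R'.head (chaseF ν L R'.frozenBody k) := by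
  obtain ⟨σ, hσ⟩ := (hpar ν ν' hν hν' _ (hL' R' hR').isInstance_frozenBody).2
  have hfire : isHom (safeSub ν' R' Term.const) R'.head (chaseF ν' L' R'.frozenBody 1) := by
    rintro _ ⟨h, hh, rfl⟩
    exact mem_chaseF_succ_of_trigger hR' subset_rfl hh
  obtain ⟨k, hk⟩ := exists_subset_chaseF_of_finite ((hL' R' hR').2.1.image _) (hfire.comp hσ)
  exact ⟨k, _, fun y hy => by simp [safeSub_of_mem_frontier hy, Term.subst], hk⟩

/-- The frozen body of a rule maps onto any of its triggers, so the image of its head found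
by the chase of the frozen body transports to every trigger. -/
lemma Parallelises.exists_head_image (hL : WfList L) (hL' : WfList L')
    (hpar : Parallelises L' L) :
    ∃ K, ∀ ν J, ∀ R' ∈ L', ∀ ρ, isHom ρ R'.body J →
      ∃ w, (∀ y ∈ R'.frontier, w y = ρ y) ∧ isHom w R'.head (chaseF ν L J K) := by
  obtain ⟨ν₀, hν₀⟩ := exists_SONaming hL
  obtain ⟨ν'₀, hν'₀⟩ := exists_SONaming hL'
  have hstep : ∀ R' ∈ L', ∀ᶠ k in Filter.atTop, ∃ w, (∀ y ∈ R'.frontier, w y = Term.const y) ∧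
      isHom w R'.head (chaseF ν₀ L R'.frozenBody k) := fun R' hR' => by
    obtain ⟨k, w, hw, hwk⟩ := hpar.exists_frozen_head_image hL' hν₀ hν'₀ hR'
    exact Filter.eventually_atTop.2 ⟨k, fun _ hk => ⟨w, hw, hwk.trans (chaseF_mono hk)⟩⟩
  obtain ⟨K, hK⟩ := (L'.finite_toSet.eventually_all.2 hstep).exists
  refine ⟨K, fun ν J R' hR' ρ hρ => ?_⟩
  obtain ⟨w₀, hw₀, hw₀K⟩ := hK R' hR'
  set β : Term → Term := fun | .const v => ρ v | t => t
  have hβ : ∀ a ∈ R'.frozenBody, mapAtom β a ∈ J := by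
    rintro _ ⟨b, hb, rfl⟩
    rw [mapAtom_subst fun t ht => (hL' R' hR').exists_var_of_mem_body hb ht]
    exact hρ ⟨b, hb, rfl⟩
  have hsim := mapAtom_transport_mem_chaseF (ν₂ := ν) hL hν₀
    (nullClosed_of_ground (hL' R' hR').isInstance_frozenBody.2) hβ K
  refine ⟨fun v => transport ν₀ ν L (termsOf R'.frozenBody) β K (w₀ v), fun y hy => ?_, ?_⟩
  · simp only [hw₀ y hy, transport_const, β]
  · rintro _ ⟨h, hh, rfl⟩
    rw [← mapAtom_subst fun t ht => (hL' R' hR').exists_var_of_mem_head hh ht]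
    exact hsim _ (hw₀K ⟨h, hh, rfl⟩)

lemma exists_hom_chaseF_one {ν' : Rule → (ℕ → Term) → ℕ → ℕ} (hL' : WfList L')
    (hν' : SONaming L' ν') {J T : Set Atom} (hJ : ∀ t ∈ termsOf J, t.isConst) (hJT : J ⊆ T)
    (hheads : ∀ R' ∈ L', ∀ ρ, isHom ρ R'.body J →
      ∃ w, (∀ y ∈ R'.frontier, w y = ρ y) ∧ isHom w R'.head T) :
    ∃ σ, isHom σ (chaseF ν' L' J 1) T := by
  have hchoice : ∀ (R' : Rule) (f : ℕ → Term), ∃ w : ℕ → Term, ∀ ρ, R' ∈ L' →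
      isHom ρ R'.body J → restrict ρ R'.frontier = f →
      (∀ y ∈ R'.frontier, w y = ρ y) ∧ isHom w R'.head T := by
    intro R' f
    by_cases hf : ∃ ρ, R' ∈ L' ∧ isHom ρ R'.body J ∧ restrict ρ R'.frontier = f
    · obtain ⟨ρ, hR', hρ, rfl⟩ := hf
      obtain ⟨w, hw, hwT⟩ := hheads R' hR' ρ hρ
      refine ⟨w, fun ρ' _ _ hres => ⟨fun y hy => ?_, hwT⟩⟩
      rw [hw y hy, ← restrict_of_mem (f := ρ') hy, hres, restrict_of_mem hy]
    · exact ⟨fun _ => Term.const 0, fun ρ hR' hρ hres => (hf ⟨ρ, hR', hρ, hres⟩).elim⟩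
  choose W hW using hchoice
  refine ⟨fun m => if h : ∃ p, NullSource ν' L' (Term.var m) p then
    let p := Classical.epsilon (NullSource ν' L' (Term.var m)); W p.1 p.2.1 p.2.2
    else Term.var m, ?_⟩
  rintro _ ⟨_, ha | ⟨R', hR', π, hπ, h, hh, rfl⟩, rfl⟩
  · rw [Atom.subst_eq_self fun t ht => hJ t (mem_termsOf.2 ⟨_, ha, ht⟩)]
    exact hJT ha
  obtain ⟨hWπ, hWT⟩ := hW R' (restrict π R'.frontier) π hR' hπ rfl
  rw [Atom.subst_subst, Atom.subst_congr (τ := W R' (restrict π R'.frontier))]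
  · exact hWT ⟨h, hh, rfl⟩
  intro t ht
  obtain ⟨y, rfl⟩ := (hL' R' hR').exists_var_of_mem_head hh ht
  rcases Rule.mem_frontier_or_mem_exist (mem_varsOf.2 (mem_termsOf.2 ⟨h, hh, ht⟩)) with hy | hy
  · obtain ⟨c, hc⟩ := Term.eq_const_of_isConst (hJ _ (hπ.apply_mem_termsOf hy.1))
    simp [Term.subst, safeSub_of_mem_frontier hy, hWπ y hy, hc]
  · simp [Term.subst, safeSub_of_mem_exist hy, exists_nullSource hR',
      hν'.epsilon_nullSource hR']

lemma Parallelises.exists_homBounded (hL : WfList L) (hL' : WfList L')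
    (hpar : Parallelises L' L) : ∃ K, HomBounded L K := by
  obtain ⟨K, hK⟩ := hpar.exists_head_image hL hL'
  obtain ⟨ν', hν'⟩ := exists_SONaming hL'
  refine ⟨K, fun ν hν J hJ => ?_⟩
  obtain ⟨σ, hσ, -⟩ := (hpar ν ν' hν hν' J hJ).1
  obtain ⟨τ, hτ⟩ := exists_hom_chaseF_one hL' hν' hJ.2 (chaseF_mono (Nat.zero_le K)) (hK ν J)
  exact ⟨_, hσ.comp hτ⟩

lemma Parallelises.chaseInf_finite (hL' : WfList L') (hpar : Parallelises L' L)
    {ν ν' : Rule → (ℕ → Term) → ℕ → ℕ} (hν : SONaming L ν) (hν' : SONaming L' ν')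
    {I : Set Atom} (hI : IsInstance I) : (chaseInf ν L I).Finite :=
  (hpar ν ν' hν hν' I hI).1.choose_spec.finite (chaseF_finite hL' hI.1 1)

end Parallelisation

section LevelBounds

def freeze (M : ℕ) : Term → Term
  | .var m => Term.const (m + M)
  | .const c => Term.const c

def unfreeze (M : ℕ) : Term → Term
  | .const c => if M ≤ c then Term.var (c - M) else Term.const c
  | .var v => Term.var v

lemma freeze_isConst (M : ℕ) (t : Term) : (freeze M t).isConst := by
  cases t <;> trivial

lemma unfreeze_freeze {M : ℕ} {t : Term} (h : ∀ c, t = Term.const c → c < M) :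
    unfreeze M (freeze M t) = t := by
  cases t with
  | var m => simp [freeze, unfreeze]
  | const c => simp [freeze, unfreeze, h c rfl]

lemma exists_const_bound {I : Set Atom} (hI : I.Finite) :
    ∃ M, ∀ c, Term.const c ∈ termsOf I → c < M := by
  obtain ⟨b, hb⟩ := ((termsOf_finite hI).preimage
    fun _ _ _ _ h => Term.const.inj h : {c | Term.const c ∈ termsOf I}.Finite).bddAbove
  exact ⟨b + 1, fun c hc => Nat.lt_succ_of_le (hb hc)⟩

variable {ν ν₀ : Rule → (ℕ → Term) → ℕ → ℕ} {L : List Rule} {K : ℕ}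

/-- Freezing the nulls of level `j` into fresh constants turns it into an instance, whose chase
maps into its level `K`; a homomorphism of a ground atom is the identity, and unfreezing
brings the image back to level `j + K`. -/
lemma HomBounded.exists_hom_fixing (hK : HomBounded L K) (hL : WfList L) (hν : SONaming L ν)
    {I : Set Atom} (hI : IsInstance I) (j n : ℕ) :
    ∃ σ, (∀ u, Term.var u ∈ termsOf (chaseF ν L I j) → σ u = Term.var u) ∧
      isHom σ (chaseF ν L I n) (chaseF ν L I (j + K)) := by
  obtain ⟨M, hM⟩ := exists_const_bound hI.1
  set S := chaseF ν L I j
  have hS : ∀ k, ∀ c, Term.const c ∈ termsOf (chaseF ν L S k) → c < M := fun k c hc =>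
    hM c (const_mem_termsOf_of_mem_chaseF hL (by rwa [← chaseF_add] at hc))
  set F := mapAtom (freeze M) '' S
  have hF : IsInstance F := by
    refine ⟨(chaseF_finite hL hI.1 j).image _, fun t ht => ?_⟩
    obtain ⟨_, ⟨b, -, rfl⟩, htb⟩ := mem_termsOf.1 ht
    obtain ⟨s, -, rfl⟩ := mem_terms_mapAtom.1 htb
    exact freeze_isConst M s
  have hunfreeze : ∀ b ∈ F, mapAtom (unfreeze M) b ∈ S := by
    rintro _ ⟨b, hb, rfl⟩
    rwa [mapAtom_mapAtom, mapAtom_eq_self fun t ht => unfreeze_freeze fun c hc =>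
      hS 0 c (hc ▸ mem_termsOf.2 ⟨b, hb, ht⟩)]
  have hfwd := mapAtom_transport_mem_chaseF (ν₂ := ν) hL hν (hν.nullClosed_chaseF hL hI.2 j)
    (T₀ := F) (fun a ha => ⟨a, ha, rfl⟩) n
  have hbwd := mapAtom_transport_mem_chaseF (ν₂ := ν) hL hν (nullClosed_of_ground hF.2)
    hunfreeze K
  obtain ⟨σc, hσc⟩ := hK ν hν F hF
  set g : Term → Term := fun t => transport ν ν L (termsOf F) (unfreeze M) K
    (Term.subst σc (transport ν ν L (termsOf S) (freeze M) n t))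
  refine ⟨fun u => g (Term.var u), fun u hu => ?_, ?_⟩
  · simp [g, transport_of_mem hu, freeze, Term.subst, transport_const, unfreeze]
  rintro _ ⟨a, ha, rfl⟩
  have ha' : a ∈ chaseF ν L S n := by
    rw [← chaseF_add]
    exact chaseF_mono (Nat.le_add_left n j) ha
  have hga : Atom.subst (fun u => g (Term.var u)) a = mapAtom g a := by
    refine mapAtom_congr fun t ht => ?_
    cases t with
    | const c =>
      have hc := hS n c (mem_termsOf.2 ⟨a, ha', ht⟩)
      simp [g, Term.subst, transport_const, freeze, unfreeze, hc]
    | var u => rfl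
  have hga' := hbwd _ (hσc ⟨_, chaseF_subset_chaseInf F n (hfwd a ha'), rfl⟩)
  rw [hga, chaseF_add]
  rwa [Atom.subst_eq_mapAtom, mapAtom_mapAtom, mapAtom_mapAtom] at hga'

lemma HomBounded.mem_chaseF_of_vars_mem (hK : HomBounded L K) (hL : WfList L)
    (hν : SONaming L ν) {I : Set Atom} (hI : IsInstance I) {j n : ℕ} {a : Atom}
    (ha : a ∈ chaseF ν L I n)
    (hvars : ∀ u, Term.var u ∈ a.terms → Term.var u ∈ termsOf (chaseF ν L I j)) :
    a ∈ chaseF ν L I (j + K) := by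
  obtain ⟨σ, hσ, hhom⟩ := hK.exists_hom_fixing hL hν hI j n
  have hfix : Atom.subst σ a = a := mapAtom_eq_self fun t ht => by
    obtain _ | u := t
    · rfl
    · exact hσ u (hvars u ht)
  exact hfix ▸ hhom ⟨a, ha, rfl⟩

lemma HomBounded.null_mem_chaseF (hK : HomBounded L K) (hL : WfList L) (hν : SONaming L ν)
    {I : Set Atom} (hI : IsInstance I) {j n : ℕ} {R : Rule} (hR : R ∈ L) {π : ℕ → Term}
    (hπ : isHom π R.body (chaseF ν L I n))
    (hfr : ∀ y ∈ R.frontier, ∀ u, π y = Term.var u → Term.var u ∈ termsOf (chaseF ν L I j))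
    {x : ℕ} (hx : x ∈ R.exist) :
    Term.var (ν R (restrict π R.frontier) x) ∈ termsOf (chaseF ν L I (j + K + 1)) := by
  obtain ⟨σ, hσ, hhom⟩ := hK.exists_hom_fixing hL hν hI j n
  have hres : restrict (fun v => Term.subst σ (π v)) R.frontier = restrict π R.frontier :=
    restrict_congr fun y hy => by
      cases hπy : π y with
      | const c => rfl
      | var u => exact hσ u (hfr y hy u hπy)
  exact hres ▸ null_mem_termsOf_chaseF_succ hR (hπ.comp hhom) hx

/-- The induction is on the level `d` at which the transported null appears in the chase of
`T₀`: the frontier of the trigger creating it appears at level `d - 1` there, hence by level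
`(K + 1) * (d - 1)` in the chase of `I`, and the null `K + 1` levels later. -/
lemma HomBounded.var_mem_chaseF_of_transport_mem (hK : HomBounded L K) (hL : WfList L)
    (hν : SONaming L ν) (hν₀ : SONaming L ν₀) {I T₀ : Set Atom} (hI : IsInstance I)
    (hT₀ : ∀ t ∈ termsOf T₀, t.isConst) (β : Term → Term) {d n u : ℕ}
    (hu : Term.var u ∈ termsOf (chaseF ν L I n))
    (hdu : transport ν ν₀ L (termsOf I) β n (Term.var u) ∈ termsOf (chaseF ν₀ L T₀ d)) :
    Term.var u ∈ termsOf (chaseF ν L I ((K + 1) * d)) := by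
  induction d using Nat.strong_induction_on generalizing n u with
  | _ d ih =>
    obtain ⟨m, hm, R, hR, π, x, hπ, hx, rfl⟩ := exists_trigger_of_var_mem_chaseF hL hI.2 hu
    rw [transport_stable hL hν (null_mem_termsOf_chaseF_succ hR hπ hx) hm,
      transport_succ_null hν hR (var_not_mem_termsOf hI.2 _)] at hdu
    obtain _ | d := d
    · exact (var_not_mem_termsOf hT₀ _ hdu).elim
    obtain ⟨m', hm', πs, hπs, hres⟩ := hν₀.exists_trigger_of_mem_chaseF hL hT₀ hR hdu
    have hfr : ∀ y ∈ R.frontier, ∀ w, π y = Term.var w →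
        Term.var w ∈ termsOf (chaseF ν L I ((K + 1) * d)) := by
      intro y hy w hw
      refine ih d d.lt_succ_self (hw ▸ hπ.apply_mem_termsOf hy.1) ?_
      have hπsy := congrFun hres y
      simp only [restrict_of_mem hy, hw] at hπsy
      exact hπsy ▸ termsOf_mono (chaseF_mono (Nat.lt_succ_iff.1 hm')) (hπs.apply_mem_termsOf hy.1)
    have := hK.null_mem_chaseF hL hν hI hR hπ hfr hx
    rwa [show (K + 1) * d + K + 1 = (K + 1) * (d + 1) by ring] at this

end LevelBounds

section CriticalInstance

variable {ν ν₀ : Rule → (ℕ → Term) → ℕ → ℕ} {L : List Rule} {K : ℕ}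

/-- Replacing all terms by one constant keeps only the predicate and the arity of an atom. -/
def collapse (a : Atom) : Atom := mapAtom (fun _ => Term.const 0) a

def criticalInstance (L : List Rule) : Set Atom := {collapse b | (R ∈ L) (b ∈ R.body)}

/-- The atoms of `I` that can match a body atom; the others never take part in a trigger. -/
def relevantPart (L : List Rule) (I : Set Atom) : Set Atom :=
  {a ∈ I | collapse a ∈ criticalInstance L}

lemma relevantPart_subset (L : List Rule) (I : Set Atom) : relevantPart L I ⊆ I :=
  fun _ ha => ha.1

lemma collapse_subst (π : ℕ → Term) (b : Atom) : collapse (Atom.subst π b) = collapse b :=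
  mapAtom_mapAtom _ _ b

lemma isInstance_criticalInstance (hL : WfList L) : IsInstance (criticalInstance L) := by
  refine ⟨((L.finite_toSet.biUnion fun R hR => ((hL R hR).1.image collapse))).subset ?_,
    fun t ht => ?_⟩
  · rintro _ ⟨R, hR, b, hb, rfl⟩
    exact Set.mem_biUnion hR ⟨b, hb, rfl⟩
  · obtain ⟨_, ⟨R, -, b, -, rfl⟩, htb⟩ := mem_termsOf.1 ht
    obtain ⟨s, -, rfl⟩ := mem_terms_mapAtom.1 htb
    trivial

lemma chaseF_union_of_not_mem_subst {S X : Set Atom}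
    (hX : ∀ R ∈ L, ∀ b ∈ R.body, ∀ π, Atom.subst π b ∉ X) (n : ℕ) :
    chaseF ν L (S ∪ X) n = chaseF ν L S n ∪ X := by
  induction n with
  | zero => rfl
  | succ n ih =>
    show chaseStep ν L (chaseF ν L (S ∪ X) n) = chaseStep ν L (chaseF ν L S n) ∪ X
    rw [ih]
    ext a
    constructor
    · rintro ((ha | ha) | ⟨R, hR, π, hπ, hmem⟩)
      · exact Or.inl (Or.inl ha)
      · exact Or.inr ha
      · refine Or.inl (Or.inr ⟨R, hR, π, ?_, hmem⟩)
        rintro _ ⟨b, hb, rfl⟩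
        exact (hπ ⟨b, hb, rfl⟩).resolve_right (hX R hR b hb π)
    · rintro (ha | ha)
      · exact chaseStep_mono Set.subset_union_left ha
      · exact Or.inl (Or.inr ha)

lemma chaseF_eq_chaseF_relevantPart_union (I : Set Atom) (n : ℕ) :
    chaseF ν L I n = chaseF ν L (relevantPart L I) n ∪ (I \ relevantPart L I) := by
  rw [← chaseF_union_of_not_mem_subst, Set.union_sdiff_cancel (relevantPart_subset L I)]
  rintro R hR b hb π ⟨hI, hirr⟩
  exact hirr ⟨hI, by rw [collapse_subst]; exact ⟨R, hR, b, hb, rfl⟩⟩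

lemma HomBounded.chaseInf_subset_chaseF (hK : HomBounded L K) (hL : WfList L)
    (hν₀ : SONaming L ν₀) {D : ℕ}
    (hD : chaseInf ν₀ L (criticalInstance L) ⊆ chaseF ν₀ L (criticalInstance L) D)
    (hν : SONaming L ν) {I : Set Atom} (hI : IsInstance I) :
    chaseInf ν L I ⊆ chaseF ν L I ((K + 1) * D + K) := by
  intro a ha
  obtain ⟨n, han⟩ := mem_chaseInf.1 ha
  rw [chaseF_eq_chaseF_relevantPart_union] at han
  obtain han | ⟨haI, -⟩ := han
  swap
  · exact chaseF_mono (Nat.zero_le _) haI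
  set J := relevantPart L I
  have hJ : IsInstance J := ⟨hI.1.subset (relevantPart_subset L I),
    fun t ht => hI.2 t (termsOf_mono (relevantPart_subset L I) ht)⟩
  have hcollapse := mapAtom_transport_mem_chaseF (ν₂ := ν₀) (T₀ := criticalInstance L) hL hν
    (nullClosed_of_ground hJ.2) (fun b hb => hb.2) n a han
  refine chaseF_mono_left (relevantPart_subset L I) _
    (hK.mem_chaseF_of_vars_mem hL hν hJ han fun u hu => ?_)
  refine hK.var_mem_chaseF_of_transport_mem hL hν hν₀ hJ (isInstance_criticalInstance hL).2
    (fun _ => Term.const 0) (mem_termsOf.2 ⟨a, han, hu⟩) ?_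
  exact termsOf_mono ((chaseF_subset_chaseInf _ n).trans hD)
    (mem_termsOf.2 ⟨_, hcollapse, mem_terms_mapAtom.2 ⟨_, hu, rfl⟩⟩)

end CriticalInstance

/-- a parallelisable rule set is bounded. -/
theorem parallelisable_implies_bounded (L : List Rule) (hL : WfList L)
    (h : Parallelisable L) : Bounded L := by
  obtain ⟨L', hL', hpar⟩ := h
  obtain ⟨K, hK⟩ := hpar.exists_homBounded hL hL'
  obtain ⟨ν₀, hν₀⟩ := exists_SONaming hL
  obtain ⟨ν'₀, hν'₀⟩ := exists_SONaming hL'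
  obtain ⟨D, hD⟩ := exists_subset_chaseF_of_finite
    (hpar.chaseInf_finite hL' hν₀ hν'₀ (isInstance_criticalInstance hL)) subset_rfl
  exact ⟨(K + 1) * D + K, fun ν hν I hI => (chaseF_subset_chaseInf I _).antisymm
    (hK.chaseInf_subset_chaseF hL hν₀ hD hν hI)⟩

end ER
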